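/- Let d ≥ 1 and let ψ₁, …, ψ_{d²} be d² unit vectors in ℂ^d forming a SIC POVM, i.e., |⟨ψ_j, ψ_k⟩|² = 1/(d+1) for all j ≠ k. Then for every unit vector φ ∈ ℂ^d one has Σ_{j=1}^{d²} |⟨φ, ψ_j⟩|² = d and Σ_{j=1}^{d²} |⟨φ, ψ_j⟩|⁴ = 2d/(d+1). -/

import Mathlib

/-!
A SIC POVM is a 2-design. Put `F₁ = ∑ⱼ ψⱼψⱼ*` and `F₂ = ∑ⱼ (ψⱼ⊗ψⱼ)(ψⱼ⊗ψⱼ)*`, and compare them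
with `B₁ = d • 1` and `B₂ = d/(d+1) • (1 + SWAP)`. The Gram entries `|⟨ψⱼ, ψₖ⟩|²` determine
`tr Fₜ²`, the normalisation of the `ψⱼ` determines `tr (Fₜ Bₜ)`, and both agree with `tr Bₜ²`.
Hence `tr ((Fₜ - Bₜ)²) = 0`, so `Fₜ = Bₜ`. The two sums are the quadratic forms
`⟨φ, F₁ φ⟩ = d` and `⟨φ⊗φ, F₂ (φ⊗φ)⟩ = 2d/(d+1)`.
-/

open scoped BigOperators

/-- The standard Hermitian inner product on `ℂ^d`, conjugate-linear in the
first argument: `⟨φ, ψ⟩ = ∑ i, conj (φ i) * ψ i`. -/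
noncomputable def inp {d : ℕ} (φ ψ : Fin d → ℂ) : ℂ :=
  ∑ i, (starRingEnd ℂ) (φ i) * ψ i

open Matrix Finset

theorem sum_sum_eq_of_diag_of_offDiag {R κ : Type*} [Fintype κ] [Ring R] {f : κ → κ → R}
    {a b : R} (hdiag : ∀ j, f j j = a) (hoff : ∀ j k, j ≠ k → f j k = b) :
    ∑ j, ∑ k, f j k = Fintype.card κ * (a + (Fintype.card κ - 1) * b) := by
  classical
  have hrow (j : κ) : ∑ k, f j k = a + (Fintype.card κ - 1) * b := by
    rw [← add_sum_erase _ _ (mem_univ j), hdiag,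
      sum_congr rfl fun k hk => hoff j k (ne_of_mem_erase hk).symm, sum_const,
      card_erase_of_mem (mem_univ j), card_univ, nsmul_eq_mul,
      Nat.cast_sub (Fintype.card_pos_iff.mpr ⟨j⟩), Nat.cast_one]
  simp only [hrow, sum_const, card_univ, nsmul_eq_mul]

namespace Matrix

variable {R ι κ : Type*}

theorem IsHermitian.eq_of_trace_mul_self_eq [Fintype ι] [CommRing R] [PartialOrder R]
    [StarRing R] [StarOrderedRing R] [NoZeroDivisors R] {A B : Matrix ι ι R} (hA : A.IsHermitian)
    (hB : B.IsHermitian) (hAA : trace (A * A) = trace (A * B))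
    (hBB : trace (B * B) = trace (A * B)) : A = B := by
  have hBA : trace (B * A) = trace (A * B) := trace_mul_comm B A
  rw [← sub_eq_zero, ← trace_conjTranspose_mul_self_eq_zero_iff, (hA.sub hB).eq, sub_mul,
    mul_sub, mul_sub, trace_sub, trace_sub, trace_sub, hAA, hBB, hBA]
  ring

section Frame

variable [CommSemiring R] [StarRing R]

def frameOperator [Fintype κ] (u : κ → ι → R) : Matrix ι ι R :=
  ∑ j, vecMulVec (u j) (star (u j))

variable [Fintype κ] (u : κ → ι → R)

theorem isHermitian_frameOperator : (frameOperator u).IsHermitian :=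
  isSelfAdjoint_sum _ fun j _ => by
    simp only [IsSelfAdjoint, star_eq_conjTranspose, conjTranspose_vecMulVec, star_star]

variable [Fintype ι]

theorem frameOperator_mulVec (v : ι → R) :
    frameOperator u *ᵥ v = ∑ j, (star (u j) ⬝ᵥ v) • u j := by
  simp [frameOperator, sum_mulVec, vecMulVec_mulVec]

theorem star_dotProduct_frameOperator_mulVec (v : ι → R) :
    star v ⬝ᵥ (frameOperator u *ᵥ v) = ∑ j, (star v ⬝ᵥ u j) * (star (u j) ⬝ᵥ v) := by
  simp [frameOperator_mulVec, dotProduct_sum, dotProduct_smul, mul_comm]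

theorem trace_frameOperator_mul (B : Matrix ι ι R) :
    trace (frameOperator u * B) = ∑ j, star (u j) ⬝ᵥ (B *ᵥ u j) := by
  simp [trace_mul_comm _ B, frameOperator, mul_sum, trace_sum, mul_vecMulVec, dotProduct_comm]

theorem trace_frameOperator_mul_self :
    trace (frameOperator u * frameOperator u) =
      ∑ j, ∑ k, (star (u j) ⬝ᵥ u k) * (star (u k) ⬝ᵥ u j) := by
  simp [trace_frameOperator_mul, frameOperator_mulVec, dotProduct_sum, dotProduct_smul, mul_comm]

end Frame

section Swap

variable [CommSemiring R]

def tensorSquare (v : ι → R) : ι × ι → R := fun p => v p.1 * v p.2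

theorem star_tensorSquare_dotProduct [Fintype ι] [StarRing R] (v w : ι → R) :
    star (tensorSquare v) ⬝ᵥ tensorSquare w = (star v ⬝ᵥ w) ^ 2 := by
  simp [tensorSquare, dotProduct, sq, Fintype.sum_prod_type, sum_mul_sum, mul_mul_mul_comm]

variable [DecidableEq ι]

def swapMatrix : Matrix (ι × ι) (ι × ι) R := (Equiv.prodComm ι ι).toPEquiv.toMatrix

theorem isHermitian_swapMatrix [StarRing R] :
    (swapMatrix : Matrix (ι × ι) (ι × ι) R).IsHermitian := by
  ext p q
  simp only [swapMatrix, conjTranspose_apply, PEquiv.toMatrix_apply, Equiv.toPEquiv_apply,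
    Equiv.prodComm_apply, Option.mem_def, Option.some.injEq, apply_ite star, star_one, star_zero]
  grind

variable [Fintype ι]

theorem swapMatrix_mul_self : (swapMatrix * swapMatrix : Matrix (ι × ι) (ι × ι) R) = 1 := by
  rw [swapMatrix, PEquiv.toMatrix_toPEquiv_mul]
  ext p q
  simp [one_apply]

theorem trace_swapMatrix : trace (swapMatrix : Matrix (ι × ι) (ι × ι) R) = Fintype.card ι := by
  rw [trace, Fintype.sum_prod_type]
  simp [swapMatrix, Prod.ext_iff, eq_comm (b := (_ : ι))]

theorem swapMatrix_mulVec_tensorSquare (v : ι → R) :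
    swapMatrix *ᵥ tensorSquare v = tensorSquare v := by
  ext p
  simp [swapMatrix, PEquiv.toMatrix_toPEquiv_mulVec, tensorSquare, mul_comm]

theorem one_add_swapMatrix_mulVec_tensorSquare (v : ι → R) :
    (1 + swapMatrix) *ᵥ tensorSquare v = (2 : R) • tensorSquare v := by
  rw [add_mulVec, one_mulVec, swapMatrix_mulVec_tensorSquare, two_smul]

end Swap

end Matrix

theorem inp_eq_star_dotProduct {d : ℕ} (φ ψ : Fin d → ℂ) : inp φ ψ = star φ ⬝ᵥ ψ := rfl

theorem ofReal_norm_inp_sq {d : ℕ} (φ ψ : Fin d → ℂ) :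
    ((‖inp φ ψ‖ ^ 2 : ℝ) : ℂ) = inp φ ψ * inp ψ φ := by
  rw [Complex.ofReal_pow, ← Complex.mul_conj', inp_eq_star_dotProduct ψ, star_dotProduct]
  rfl

def IsSIC {d : ℕ} (ψ : Fin (d ^ 2) → Fin d → ℂ) : Prop :=
  (∀ j, inp (ψ j) (ψ j) = 1) ∧ ∀ j k, j ≠ k → ‖inp (ψ j) (ψ k)‖ ^ 2 = 1 / (d + 1)

open scoped ComplexOrder

namespace IsSIC

variable {d : ℕ} {ψ : Fin (d ^ 2) → Fin d → ℂ}

theorem inp_mul_inp (h : IsSIC ψ) (j k : Fin (d ^ 2)) :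
    inp (ψ j) (ψ k) * inp (ψ k) (ψ j) = if j = k then 1 else ((d : ℂ) + 1)⁻¹ := by
  split_ifs with hjk
  · rw [hjk, h.1, one_mul]
  · rw [← ofReal_norm_inp_sq, h.2 j k hjk]
    push_cast
    rw [one_div]

theorem sum_sum_inp_mul_inp_pow (h : IsSIC ψ) (t : ℕ) :
    ∑ j, ∑ k, (inp (ψ j) (ψ k) * inp (ψ k) (ψ j)) ^ t =
      (d : ℂ) ^ 2 * (1 + ((d : ℂ) ^ 2 - 1) * ((d : ℂ) + 1)⁻¹ ^ t) := by
  rw [sum_sum_eq_of_diag_of_offDiag (a := 1) (b := ((d : ℂ) + 1)⁻¹ ^ t)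
    (fun j => by rw [h.inp_mul_inp, if_pos rfl, one_pow])
    (fun j k hjk => by rw [h.inp_mul_inp, if_neg hjk])]
  simp

theorem frameOperator_eq (h : IsSIC ψ) : frameOperator ψ = (d : ℂ) • 1 := by
  have hd : (d : ℂ) + 1 ≠ 0 := by exact_mod_cast d.succ_ne_zero
  have hcross : trace (frameOperator ψ * ((d : ℂ) • 1)) = (d : ℂ) ^ 3 := by
    simp only [trace_frameOperator_mul, smul_mulVec, one_mulVec, dotProduct_smul,
      ← inp_eq_star_dotProduct, h.1]
    simp only [smul_eq_mul, mul_one, sum_const, card_univ, Fintype.card_fin, nsmul_eq_mul,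
      Nat.cast_pow]
    ring
  refine (isHermitian_frameOperator ψ).eq_of_trace_mul_self_eq
    (isHermitian_one.smul (by simp [IsSelfAdjoint])) ?_ ?_ <;> rw [hcross]
  · rw [trace_frameOperator_mul_self]
    simp only [← inp_eq_star_dotProduct]
    have hgram := h.sum_sum_inp_mul_inp_pow 1
    simp only [pow_one] at hgram
    rw [hgram]
    field_simp
    ring
  · simp only [Algebra.mul_smul_comm, mul_one, trace_smul, trace_one, Fintype.card_fin,
      smul_eq_mul]
    ring

theorem frameOperator_tensorSquare_eq (h : IsSIC ψ) :
    frameOperator (fun j => tensorSquare (ψ j)) = ((d : ℂ) / (d + 1)) • (1 + swapMatrix) := by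
  have hd : (d : ℂ) + 1 ≠ 0 := by exact_mod_cast d.succ_ne_zero
  have hcross : trace (frameOperator (fun j => tensorSquare (ψ j)) *
      (((d : ℂ) / (d + 1)) • (1 + swapMatrix))) = 2 * (d : ℂ) ^ 3 / (d + 1) := by
    simp only [trace_frameOperator_mul, smul_mulVec, one_add_swapMatrix_mulVec_tensorSquare,
      dotProduct_smul, star_tensorSquare_dotProduct, ← inp_eq_star_dotProduct, h.1]
    simp only [one_pow, smul_eq_mul, sum_const, card_univ, Fintype.card_fin, nsmul_eq_mul,
      Nat.cast_pow]
    field_simp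
  refine (isHermitian_frameOperator _).eq_of_trace_mul_self_eq
    ((isHermitian_one.add isHermitian_swapMatrix).smul (by simp [IsSelfAdjoint])) ?_ ?_ <;>
    rw [hcross]
  · rw [trace_frameOperator_mul_self]
    simp only [star_tensorSquare_dotProduct, ← inp_eq_star_dotProduct, ← mul_pow,
      h.sum_sum_inp_mul_inp_pow]
    field_simp
    ring
  · simp only [smul_add, mul_add, Algebra.mul_smul_comm, mul_one, add_mul,
      Algebra.smul_mul_assoc, one_mul, swapMatrix_mul_self, trace_add, trace_smul, trace_one,
      Fintype.card_prod, Fintype.card_fin, Nat.cast_mul, smul_eq_mul, trace_swapMatrix]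
    field_simp
    ring

theorem sum_norm_inp_sq (h : IsSIC ψ) {φ : Fin d → ℂ} (hφ : inp φ φ = 1) :
    ∑ j, ‖inp φ (ψ j)‖ ^ 2 = d := by
  apply Complex.ofReal_injective
  calc ((∑ j, ‖inp φ (ψ j)‖ ^ 2 : ℝ) : ℂ) = star φ ⬝ᵥ (frameOperator ψ *ᵥ φ) := by
        simp only [Complex.ofReal_sum, ofReal_norm_inp_sq, star_dotProduct_frameOperator_mulVec]
        rfl
    _ = d := by
        rw [h.frameOperator_eq, smul_mulVec, one_mulVec, dotProduct_smul,
          ← inp_eq_star_dotProduct, hφ, smul_eq_mul, mul_one]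

theorem sum_norm_inp_pow_four (h : IsSIC ψ) {φ : Fin d → ℂ} (hφ : inp φ φ = 1) :
    ∑ j, ‖inp φ (ψ j)‖ ^ 4 = 2 * d / (d + 1) := by
  apply Complex.ofReal_injective
  calc ((∑ j, ‖inp φ (ψ j)‖ ^ 4 : ℝ) : ℂ)
      = star (tensorSquare φ) ⬝ᵥ
          (frameOperator (fun j => tensorSquare (ψ j)) *ᵥ tensorSquare φ) := by
        simp only [star_dotProduct_frameOperator_mulVec, star_tensorSquare_dotProduct,
          ← inp_eq_star_dotProduct, ← mul_pow, ← ofReal_norm_inp_sq, Complex.ofReal_sum]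
        push_cast
        ring_nf
    _ = (2 * d / (d + 1) : ℝ) := by
        rw [h.frameOperator_tensorSquare_eq, smul_mulVec, one_add_swapMatrix_mulVec_tensorSquare,
          dotProduct_smul, dotProduct_smul, star_tensorSquare_dotProduct,
          ← inp_eq_star_dotProduct, hφ]
        push_cast
        ring

end IsSIC

theorem stmt13_general (d : ℕ)
    (ψ : Fin (d ^ 2) → (Fin d → ℂ)) (hψ : ∀ j, inp (ψ j) (ψ j) = 1)
    (hSIC : ∀ j k, j ≠ k →
      ‖inp (ψ j) (ψ k)‖ ^ 2 = 1 / (d + 1))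
    (φ : Fin d → ℂ) (hφ : inp φ φ = 1) :
    ∑ j, ‖inp φ (ψ j)‖ ^ 2 = d ∧
      ∑ j, ‖inp φ (ψ j)‖ ^ 4 = 2 * d / (d + 1) := by
  have h : IsSIC ψ := ⟨hψ, hSIC⟩
  exact ⟨h.sum_norm_inp_sq hφ, h.sum_norm_inp_pow_four hφ⟩

theorem stmt13 (d : ℕ) (hd : 1 ≤ d)
    (ψ : Fin (d ^ 2) → (Fin d → ℂ)) (hψ : ∀ j, inp (ψ j) (ψ j) = 1)
    (hSIC : ∀ j k, j ≠ k →
      ‖inp (ψ j) (ψ k)‖ ^ 2 = 1 / (d + 1))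
    (φ : Fin d → ℂ) (hφ : inp φ φ = 1) :
    ∑ j, ‖inp φ (ψ j)‖ ^ 2 = d ∧
      ∑ j, ‖inp φ (ψ j)‖ ^ 4 = 2 * d / (d + 1) :=
  stmt13_general d ψ hψ hSIC φ hφ
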